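/- arXiv:1710.05002 — 10 statements merged into one kernel-verified Lean document; each statement's English description precedes it below -/
import Mathlib

section
/- Let R' be a commutative ring, P a unit of R', M an R'-module, and u an R'-linear endomorphism of M satisfying u^3 + P*u = 0. Then M is the internal direct sum of ker(u) and range(u); moreover range(u) = ker(u^2 + P*id_M) and ker(u) = range(u^2 + P*id_M). -/
/-- If `u` is an endomorphism of an `R'`-module `M` with
`u^3 + P•u = 0` for a unit `P`, then `M = ker u ⊕ range u`, with
`range u = ker (u^2 + P) ` and `ker u = range (u^2 + P)`. -/
theorem stmt1 {R : Type*} [CommRing R] {M : Type*} [AddCommGroup M] [Module R M]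
    (P : R) (hP : IsUnit P) (u : M →ₗ[R] M)
    (hu : u ∘ₗ u ∘ₗ u + P • u = 0) :
    (LinearMap.ker u ⊓ LinearMap.range u = ⊥ ∧
      LinearMap.ker u ⊔ LinearMap.range u = ⊤) ∧
    LinearMap.range u = LinearMap.ker (u ∘ₗ u + P • (LinearMap.id : M →ₗ[R] M)) ∧
    LinearMap.ker u = LinearMap.range (u ∘ₗ u + P • (LinearMap.id : M →ₗ[R] M)) := by
  obtain ⟨Q, hQ, hQ'⟩ : ∃ Q : R, Q * P = 1 ∧ P * Q = 1 := by
    obtain ⟨v, hv⟩ := hP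
    exact ⟨↑v⁻¹, by rw [← hv]; simp, by rw [← hv]; simp⟩
  have key : ∀ x : M, u (u (u x)) + P • u x = 0 := by
    intro x
    have := LinearMap.congr_fun hu x
    simpa using this
  refine ⟨⟨?_, ?_⟩, ?_, ?_⟩
  · rw [eq_bot_iff]
    rintro x ⟨hx1, y, rfl⟩
    have h2 : u (u y) = 0 := hx1
    have := key y
    rw [show u (u (u y)) = u (u (u y)) from rfl] at this
    have h3 : u (u (u y)) = 0 := by rw [show u (u (u y)) = u (u (u y)) from rfl]; rw [h2]; simp
    rw [h3, zero_add] at this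
    have : Q • (P • u y) = Q • (0 : M) := by rw [this]
    rwa [smul_smul, hQ, one_smul, smul_zero] at this
  · rw [eq_top_iff]
    intro x _
    have hdecomp : x = (Q • (u (u x)) + Q • (P • x)) + (-(Q • u (u x))) := by
      have : Q • (P • x) = x := by rw [smul_smul, hQ, one_smul]
      rw [this]; abel
    rw [hdecomp]
    refine Submodule.add_mem_sup ?_ ?_
    · show u _ = 0
      rw [map_add, map_smul, map_smul, map_smul, ← smul_add, key x, smul_zero]
    · exact Submodule.neg_mem _ ⟨Q • u x, by simp⟩
  · apply le_antisymm
    · rintro x ⟨y, rfl⟩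
      show u (u (u y)) + P • u y = 0
      exact key y
    · intro x hx
      have hx' : u (u x) + P • x = 0 := by simpa using hx
      refine ⟨-(Q • u x), ?_⟩
      have : x = -(Q • u (u x)) := by
        have : Q • (u (u x) + P • x) = 0 := by rw [hx']; simp
        rw [smul_add, smul_smul, hQ, one_smul] at this
        linear_combination (norm := module) this
      rw [map_neg, map_smul]
      exact this.symm
  · apply le_antisymm
    · intro x hx
      have hx0 : u x = 0 := hx
      refine ⟨Q • x, ?_⟩
      show u (u (Q • x)) + P • (Q • x) = x
      simp only [map_smul, hx0, map_zero, smul_zero, zero_add, smul_smul, hQ', one_smul]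
    · rintro x ⟨y, rfl⟩
      show u (u (u y) + P • y) = 0
      rw [map_add, map_smul]
      exact key y
end

section
/- Let R' be a commutative ring, P a unit of R', M an R'-module, ι a finite index type, and (u_i)_{i ∈ ι} a family of pairwise commuting R'-linear endomorphisms of M each satisfying u_i^3 + P*u_i = 0. For each subset s ⊆ ι set V(s) = (⋂_{i ∈ s} ker(u_i)) ∩ (⋂_{i ∉ s} range(u_i)). Then M is the internal direct sum of the submodules V(s) as s ranges over all subsets of ι. -/
/-!
Put `Q = -P⁻¹`. Then `e i = Q • u i ^ 2` satisfies `u i * e i = e i * u i = u i`, so it is an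
idempotent with the same kernel and range as `u i`, and the `e i` commute. In the commutative
subring of `Module.End R M` generated by them, the products
`∏_{i ∈ s} (1 - e i) * ∏_{i ∉ s} e i` are complete orthogonal idempotents, because expanding
`1 = ∏ i, ((1 - e i) + e i)` gives their sum, and the image of the one indexed by `s` is
`⋂_{i ∈ s} ker (e i) ⊓ ⋂_{i ∉ s} range (e i)`.
-/

open LinearMap

section BooleanAtom

open scoped Classical

variable {A ι : Type*} [CommRing A] {e : ι → A}

theorem isIdempotentElem_ite_one_sub (he : ∀ i, IsIdempotentElem (e i)) (s : Set ι) (i : ι) :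
    IsIdempotentElem (if i ∈ s then 1 - e i else e i) := by
  split_ifs
  exacts [(he i).one_sub, he i]

variable [Fintype ι]

noncomputable def booleanAtom (e : ι → A) (s : Set ι) : A :=
  ∏ i, if i ∈ s then 1 - e i else e i

theorem booleanAtom_eq_mul_prod_erase (e : ι → A) (s : Set ι) (i : ι) :
    booleanAtom e s = (if i ∈ s then 1 - e i else e i) *
      ∏ j ∈ Finset.univ.erase i, (if j ∈ s then 1 - e j else e j) :=
  (Finset.mul_prod_erase _ _ (Finset.mem_univ i)).symm

theorem ite_one_sub_mul_booleanAtom (he : ∀ i, IsIdempotentElem (e i)) (s : Set ι) (i : ι) :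
    (if i ∈ s then 1 - e i else e i) * booleanAtom e s = booleanAtom e s := by
  rw [booleanAtom_eq_mul_prod_erase e s i, ← mul_assoc,
    (isIdempotentElem_ite_one_sub he s i).eq]

theorem isIdempotentElem_booleanAtom (he : ∀ i, IsIdempotentElem (e i)) (s : Set ι) :
    IsIdempotentElem (booleanAtom e s) :=
  Finset.prod_induction _ IsIdempotentElem (fun _ _ ha hb => ha.mul hb) .one
    fun i _ => isIdempotentElem_ite_one_sub he s i

theorem booleanAtom_mul_booleanAtom_of_ne (he : ∀ i, IsIdempotentElem (e i)) {s t : Set ι}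
    (hst : s ≠ t) : booleanAtom e s * booleanAtom e t = 0 := by
  obtain ⟨i, hi⟩ : ∃ i, ¬(i ∈ s ↔ i ∈ t) := by
    by_contra! h
    exact hst (Set.ext h)
  have hfactor : (if i ∈ s then 1 - e i else e i) * (if i ∈ t then 1 - e i else e i) = 0 := by
    by_cases his : i ∈ s
    · rw [if_pos his, if_neg (fun hit => hi (iff_of_true his hit)), (he i).one_sub_mul_self]
    · rw [if_neg his, if_pos (not_not.mp fun hit => hi (iff_of_false his hit)),
        (he i).mul_one_sub_self]
  rw [booleanAtom_eq_mul_prod_erase e s i, booleanAtom_eq_mul_prod_erase e t i,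
    mul_mul_mul_comm, hfactor, zero_mul]

theorem sum_booleanAtom (e : ι → A) : ∑ s, booleanAtom e s = 1 := by
  rw [← Fintype.sum_equiv Fintype.finsetEquivSet _ _ fun _ => rfl]
  simpa [booleanAtom, Finset.prod_ite, Finset.filter_not, Finset.filter_mem_eq_inter,
    Finset.compl_eq_univ_sdiff] using (Fintype.prod_add (fun i => 1 - e i) e).symm

theorem completeOrthogonalIdempotents_booleanAtom (he : ∀ i, IsIdempotentElem (e i)) :
    CompleteOrthogonalIdempotents (booleanAtom e) where
  idem := isIdempotentElem_booleanAtom he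
  ortho _ _ hst := booleanAtom_mul_booleanAtom_of_ne he hst
  complete := sum_booleanAtom e

end BooleanAtom

section Module

variable {R M ι : Type*} [Ring R] [AddCommGroup M] [Module R M]

theorem CompleteOrthogonalIdempotents.isInternal_range {I : Type*} [Fintype I] [DecidableEq I]
    {e : I → Module.End R M} (he : CompleteOrthogonalIdempotents e) :
    DirectSum.IsInternal fun i => range (e i) := by
  refine DirectSum.isInternal_submodule_of_iSupIndep_of_iSup_eq_top (fun i => ?_) ?_
  · have hker : (⨆ j, ⨆ (_ : j ≠ i), range (e j)) ≤ ker (e i) :=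
      iSup₂_le fun j hj => range_le_ker_iff.mpr (he.ortho hj.symm)
    refine Submodule.disjoint_def.mpr fun x hxi hx => ?_
    rw [← (he.idem i).mem_range_iff.mp hxi]
    exact hker hx
  · refine eq_top_iff.mpr fun x _ => ?_
    have hx : ∑ i, e i x = x := by rw [← LinearMap.sum_apply, he.complete, Module.End.one_apply]
    rw [← hx]
    exact Submodule.sum_mem _ fun i _ => Submodule.mem_iSup_of_mem i (mem_range_self _ _)

def jointKerRange (p : ι → Module.End R M) (s : Set ι) : Submodule R M :=
  (⨅ i ∈ s, ker (p i)) ⊓ (⨅ i ∈ sᶜ, range (p i))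

open scoped Classical in
theorem mem_jointKerRange_iff {p : ι → Module.End R M} (hp : ∀ i, IsIdempotentElem (p i))
    {s : Set ι} {x : M} :
    x ∈ jointKerRange p s ↔ ∀ i, (if i ∈ s then 1 - p i else p i) x = x := by
  simp only [jointKerRange, Submodule.mem_inf, Submodule.mem_iInf, mem_ker, (hp _).mem_range_iff,
    Set.mem_compl_iff, ← forall_and]
  refine forall_congr' fun i => ?_
  by_cases hi : i ∈ s <;> simp [hi, sub_eq_self]

theorem range_map_booleanAtom [Fintype ι] {A : Type*} [CommRing A] {e : ι → A}
    (φ : A →+* Module.End R M) (he : ∀ i, IsIdempotentElem (e i)) (s : Set ι) :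
    range (φ (booleanAtom e s)) = jointKerRange (fun i => φ (e i)) s := by
  classical
  ext x
  rw [((isIdempotentElem_booleanAtom he s).map φ).mem_range_iff,
    mem_jointKerRange_iff fun i => (he i).map φ]
  have hφ : ∀ i, (if i ∈ s then 1 - φ (e i) else φ (e i)) =
      φ (if i ∈ s then 1 - e i else e i) := by
    intro i
    split_ifs <;> simp
  simp only [hφ]
  constructor
  · intro hx i
    rw [← hx, ← Module.End.mul_apply, ← map_mul, ite_one_sub_mul_booleanAtom he]
  · intro hx
    refine Finset.prod_induction _ (fun a => φ a x = x) (fun a b ha hb => ?_) (by simp)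
      fun i _ => hx i
    rw [map_mul, Module.End.mul_apply, hb, ha]

open scoped IsMulCommutative in
theorem isInternal_jointKerRange [Fintype ι] {p : ι → Module.End R M}
    (hcomm : ∀ i j, Commute (p i) (p j)) (hp : ∀ i, IsIdempotentElem (p i)) :
    DirectSum.IsInternal (jointKerRange p) := by
  let A := Subring.closure (Set.range p)
  have : IsMulCommutative A := Subring.isMulCommutative_closure <| by
    rintro _ ⟨i, rfl⟩ _ ⟨j, rfl⟩
    exact hcomm i j
  let e : ι → A := fun i => ⟨p i, Subring.subset_closure ⟨i, rfl⟩⟩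
  have he : ∀ i, IsIdempotentElem (e i) := fun i => Subtype.ext (hp i)
  let φ : A →+* Module.End R M := A.subtype
  have h := ((completeOrthogonalIdempotents_booleanAtom he).map φ).isInternal_range
  simp only [Function.comp_apply, range_map_booleanAtom φ he] at h
  exact h

end Module

section Cubic

variable {R M : Type*} [CommRing R] [AddCommGroup M] [Module R M] {u : Module.End R M} {P Q : R}

theorem smul_pow_three_eq_self (hu : u ^ 3 + P • u = 0) (hQ : Q * P = -1) : Q • u ^ 3 = u := by
  rw [eq_neg_of_add_eq_zero_left hu, smul_neg, smul_smul, hQ, neg_one_smul, neg_neg]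

theorem mul_smul_sq_eq_self (hu : u ^ 3 + P • u = 0) (hQ : Q * P = -1) :
    u * (Q • u ^ 2) = u := by
  rw [mul_smul_comm, ← pow_succ', smul_pow_three_eq_self hu hQ]

theorem smul_sq_mul_eq_self (hu : u ^ 3 + P • u = 0) (hQ : Q * P = -1) :
    Q • u ^ 2 * u = u := by
  rw [smul_mul_assoc, ← pow_succ, smul_pow_three_eq_self hu hQ]

theorem isIdempotentElem_smul_sq (hu : u ^ 3 + P • u = 0) (hQ : Q * P = -1) :
    IsIdempotentElem (Q • u ^ 2) :=
  calc Q • u ^ 2 * (Q • u ^ 2) = Q • (u * (u * (Q • u ^ 2))) := by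
        rw [smul_mul_assoc, ← mul_assoc, ← sq]
    _ = Q • u ^ 2 := by rw [mul_smul_sq_eq_self hu hQ, sq]

theorem ker_smul_sq (hu : u ^ 3 + P • u = 0) (hQ : Q * P = -1) : ker (Q • u ^ 2) = ker u := by
  ext x
  refine ⟨fun hx => ?_, fun hx => ?_⟩ <;> rw [mem_ker] at hx ⊢
  · rw [← mul_smul_sq_eq_self hu hQ, Module.End.mul_apply, hx, map_zero]
  · rw [LinearMap.smul_apply, sq, Module.End.mul_apply, hx, map_zero, smul_zero]

theorem range_smul_sq (hu : u ^ 3 + P • u = 0) (hQ : Q * P = -1) :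
    range (Q • u ^ 2) = range u := by
  ext x
  refine ⟨fun ⟨y, hy⟩ => ⟨Q • u y, ?_⟩, fun ⟨y, hy⟩ => ⟨u y, ?_⟩⟩
  · rw [← hy, LinearMap.smul_apply, sq, Module.End.mul_apply, map_smul]
  · rw [← hy, ← Module.End.mul_apply, smul_sq_mul_eq_self hu hQ]

theorem jointKerRange_smul_sq {ι : Type*} {u : ι → Module.End R M}
    (hu : ∀ i, u i ^ 3 + P • u i = 0) (hQ : Q * P = -1) :
    jointKerRange (fun i => Q • u i ^ 2) = jointKerRange u := by
  funext s
  simp only [jointKerRange, ker_smul_sq (hu _) hQ, range_smul_sq (hu _) hQ]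

end Cubic

open scoped Classical in
/-- For a finite family of pairwise commuting endomorphisms `u i`
of an `R'`-module `M` each satisfying `u_i^3 + P•u_i = 0` with `P` a unit,
the module `M` is the internal direct sum of the submodules
`V(s) = (⋂_{i ∈ s} ker (u i)) ⊓ (⋂_{i ∉ s} range (u i))` over all subsets `s`. -/
theorem stmt2 {R M : Type*} [CommRing R] [AddCommGroup M] [Module R M]
    {ι : Type*} [Fintype ι] (P : R) (hP : IsUnit P) (u : ι → M →ₗ[R] M)
    (hcomm : ∀ i j, u i ∘ₗ u j = u j ∘ₗ u i)
    (hu : ∀ i, u i ∘ₗ u i ∘ₗ u i + P • u i = 0) :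
    DirectSum.IsInternal (fun s : Set ι =>
      (⨅ i ∈ s, LinearMap.ker (u i)) ⊓ (⨅ i ∈ sᶜ, LinearMap.range (u i))) := by
  obtain ⟨Q, hQ⟩ : ∃ Q : R, Q * P = -1 := ⟨-↑hP.unit⁻¹, by rw [neg_mul, hP.val_inv_mul]⟩
  have hu3 : ∀ i, u i ^ 3 + P • u i = 0 := fun i => by rw [pow_three]; exact hu i
  have hcomm' : ∀ i j, Commute (Q • u i ^ 2) (Q • u j ^ 2) := fun i j =>
    (((show Commute (u i) (u j) from hcomm i j).pow_pow 2 2).smul_left Q).smul_right Q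
  have h := isInternal_jointKerRange hcomm' fun i => isIdempotentElem_smul_sq (hu3 i) hQ
  rwa [jointKerRange_smul_sq hu3 hQ] at h
end

section
/- Let R' be a commutative ring, P a unit of R', M an R'-module, and u₁, u₂, u₃ pairwise commuting R'-linear endomorphisms of M satisfying the vertex relations u₁ + u₂ + u₃ = 0, u₁u₂ + u₂u₃ + u₃u₁ = P•id_M, and u₁u₂u₃ = 0. Then the endomorphisms π₁ = P⁻¹ • (u₂ ∘ u₃), π₂ = P⁻¹ • (u₃ ∘ u₁), π₃ = P⁻¹ • (u₁ ∘ u₂) are idempotent, pairwise orthogonal (π_i ∘ π_j = 0 for i ≠ j), and satisfy π₁ + π₂ + π₃ = id_M. -/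
/-!
Multiplying the quadratic relation by `u₂u₃` and using `u₁u₂u₃ = 0` gives `(u₂u₃)² = P • u₂u₃`,
and similarly for `u₃u₁` and `u₁u₂`; a product of two distinct ones among these contains
`u₁u₂u₃` as a factor. The quadratic relation itself is the completeness. Since the `uᵢ`
commute, these are identities in the commutative subalgebra they generate.
-/

theorem completeOrthogonalIdempotents_of_vertex {R A : Type*} [CommRing R] [CommRing A]
    [Algebra R A] (P : Rˣ) {a b c : A}
    (hquad : a * b + b * c + c * a = (P : R) • 1) (hcube : a * b * c = 0) :
    CompleteOrthogonalIdempotents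
      ![(↑P⁻¹ : R) • (b * c), (↑P⁻¹ : R) • (c * a), (↑P⁻¹ : R) • (a * b)] := by
  simp only [Algebra.smul_def, mul_one] at hquad ⊢
  set q := algebraMap R A ↑P⁻¹
  have hq : q * algebraMap R A P = 1 := by rw [← map_mul, Units.inv_mul, map_one]
  refine ⟨⟨fun i => ?_, fun i j hij => ?_⟩, ?_⟩
  · fin_cases i <;>
      simp only [IsIdempotentElem, Fin.zero_eta, Fin.mk_one, Fin.reduceFinMk, Matrix.cons_val]
    · linear_combination q ^ 2 * (b * c) * hquad - q ^ 2 * (b + c) * hcube + q * (b * c) * hq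
    · linear_combination q ^ 2 * (c * a) * hquad - q ^ 2 * (c + a) * hcube + q * (c * a) * hq
    · linear_combination q ^ 2 * (a * b) * hquad - q ^ 2 * (a + b) * hcube + q * (a * b) * hq
  · fin_cases i <;> fin_cases j <;>
      simp only [Fin.zero_eta, Fin.mk_one, Fin.reduceFinMk, Matrix.cons_val, ne_eq,
        not_true_eq_false] at hij ⊢ <;>
      first
      | linear_combination q ^ 2 * a * hcube
      | linear_combination q ^ 2 * b * hcube
      | linear_combination q ^ 2 * c * hcube
  · simp only [Fin.sum_univ_three, Matrix.cons_val]
    linear_combination q * hquad + hq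

open scoped IsMulCommutative in
theorem completeOrthogonalIdempotents_of_vertex_of_commute {R A : Type*} [CommRing R] [Ring A]
    [Algebra R A] (P : Rˣ) {a b c : A} (hab : Commute a b) (hac : Commute a c)
    (hbc : Commute b c) (hquad : a * b + b * c + c * a = (P : R) • 1) (hcube : a * b * c = 0) :
    CompleteOrthogonalIdempotents
      ![(↑P⁻¹ : R) • (b * c), (↑P⁻¹ : R) • (c * a), (↑P⁻¹ : R) • (a * b)] := by
  let S := Algebra.adjoin R {a, b, c}
  have : IsMulCommutative S := Algebra.isMulCommutative_adjoin R <| by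
    simp only [Set.mem_insert_iff, Set.mem_singleton_iff]
    rintro x (rfl | rfl | rfl) y (rfl | rfl | rfl) <;> simp only [hab.eq, hac.eq, hbc.eq]
  have hS : CompleteOrthogonalIdempotents _ :=
    (completeOrthogonalIdempotents_of_vertex P (a := (⟨a, Algebra.subset_adjoin (by simp)⟩ : S))
      (b := ⟨b, Algebra.subset_adjoin (by simp)⟩) (c := ⟨c, Algebra.subset_adjoin (by simp)⟩)
      (Subtype.ext hquad) (Subtype.ext hcube)).map S.val.toRingHom
  convert hS using 1
  ext i
  fin_cases i <;> rfl

theorem stmt3_general {R M : Type*} [CommRing R] [AddCommGroup M] [Module R M]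
    (P : R) (hP : IsUnit P) (u₁ u₂ u₃ : M →ₗ[R] M)
    (hc12 : u₁ ∘ₗ u₂ = u₂ ∘ₗ u₁) (hc13 : u₁ ∘ₗ u₃ = u₃ ∘ₗ u₁)
    (hc23 : u₂ ∘ₗ u₃ = u₃ ∘ₗ u₂)
    (hquad : u₁ ∘ₗ u₂ + u₂ ∘ₗ u₃ + u₃ ∘ₗ u₁ = P • (LinearMap.id : M →ₗ[R] M))
    (hcube : u₁ ∘ₗ u₂ ∘ₗ u₃ = 0)
    (π₁ π₂ π₃ : M →ₗ[R] M)
    (hπ₁ : π₁ = (↑hP.unit⁻¹ : R) • (u₂ ∘ₗ u₃))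
    (hπ₂ : π₂ = (↑hP.unit⁻¹ : R) • (u₃ ∘ₗ u₁))
    (hπ₃ : π₃ = (↑hP.unit⁻¹ : R) • (u₁ ∘ₗ u₂)) :
    (π₁ ∘ₗ π₁ = π₁ ∧ π₂ ∘ₗ π₂ = π₂ ∧ π₃ ∘ₗ π₃ = π₃) ∧
    (π₁ ∘ₗ π₂ = 0 ∧ π₂ ∘ₗ π₁ = 0 ∧ π₁ ∘ₗ π₃ = 0 ∧ π₃ ∘ₗ π₁ = 0 ∧
      π₂ ∘ₗ π₃ = 0 ∧ π₃ ∘ₗ π₂ = 0) ∧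
    π₁ + π₂ + π₃ = LinearMap.id := by
  have he : CompleteOrthogonalIdempotents ![π₁, π₂, π₃] := by
    subst hπ₁ hπ₂ hπ₃
    refine completeOrthogonalIdempotents_of_vertex_of_commute (A := Module.End R M) hP.unit
      hc12 hc13 hc23 ?_ ((mul_assoc u₁ u₂ u₃).trans hcube)
    rw [hP.unit_spec]
    exact hquad
  refine ⟨⟨he.idem 0, he.idem 1, he.idem 2⟩, ⟨he.ortho (i := 0) (j := 1) (by decide),
    he.ortho (i := 1) (j := 0) (by decide), he.ortho (i := 0) (j := 2) (by decide),
    he.ortho (i := 2) (j := 0) (by decide), he.ortho (i := 1) (j := 2) (by decide),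
    he.ortho (i := 2) (j := 1) (by decide)⟩, ?_⟩
  simpa [Fin.sum_univ_three, Module.End.one_eq_id] using he.complete

/-- If `u₁, u₂, u₃` are pairwise commuting endomorphisms satisfying
the vertex relations with a unit `P`, then `π₁ = P⁻¹ • (u₂ ∘ u₃)`,
`π₂ = P⁻¹ • (u₃ ∘ u₁)`, `π₃ = P⁻¹ • (u₁ ∘ u₂)` are pairwise orthogonal
idempotents summing to the identity. -/
theorem stmt3 {R M : Type*} [CommRing R] [AddCommGroup M] [Module R M]
    (P : R) (hP : IsUnit P) (u₁ u₂ u₃ : M →ₗ[R] M)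
    (hc12 : u₁ ∘ₗ u₂ = u₂ ∘ₗ u₁) (hc13 : u₁ ∘ₗ u₃ = u₃ ∘ₗ u₁)
    (hc23 : u₂ ∘ₗ u₃ = u₃ ∘ₗ u₂)
    (hsum : u₁ + u₂ + u₃ = 0)
    (hquad : u₁ ∘ₗ u₂ + u₂ ∘ₗ u₃ + u₃ ∘ₗ u₁ = P • (LinearMap.id : M →ₗ[R] M))
    (hcube : u₁ ∘ₗ u₂ ∘ₗ u₃ = 0)
    (π₁ π₂ π₃ : M →ₗ[R] M)
    (hπ₁ : π₁ = (↑hP.unit⁻¹ : R) • (u₂ ∘ₗ u₃))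
    (hπ₂ : π₂ = (↑hP.unit⁻¹ : R) • (u₃ ∘ₗ u₁))
    (hπ₃ : π₃ = (↑hP.unit⁻¹ : R) • (u₁ ∘ₗ u₂)) :
    (π₁ ∘ₗ π₁ = π₁ ∧ π₂ ∘ₗ π₂ = π₂ ∧ π₃ ∘ₗ π₃ = π₃) ∧
    (π₁ ∘ₗ π₂ = 0 ∧ π₂ ∘ₗ π₁ = 0 ∧ π₁ ∘ₗ π₃ = 0 ∧ π₃ ∘ₗ π₁ = 0 ∧
      π₂ ∘ₗ π₃ = 0 ∧ π₃ ∘ₗ π₂ = 0) ∧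
    π₁ + π₂ + π₃ = LinearMap.id :=
  stmt3_general P hP u₁ u₂ u₃ hc12 hc13 hc23 hquad hcube π₁ π₂ π₃ hπ₁ hπ₂ hπ₃
end

section
/- Let R' be a commutative ring, P a unit of R', M an R'-module, and u₁, u₂, u₃ pairwise commuting R'-linear endomorphisms of M satisfying the vertex relations u₁ + u₂ + u₃ = 0, u₁u₂ + u₂u₃ + u₃u₁ = P•id_M, and u₁u₂u₃ = 0. Then M is the internal direct sum ker(u₁) ⊕ ker(u₂) ⊕ ker(u₃); moreover, for each cyclic permutation (i,j,k) of (1,2,3), ker(u_i) = range(u_j ∘ u_k) and ker(u_i) ⊆ range(u_j) ∩ range(u_k), so that ker(u_i) = ker(u_i) ∩ range(u_j) ∩ range(u_k). -/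
/-- Under the vertex relations with a unit `P`, the module `M` is
the internal direct sum `ker u₁ ⊕ ker u₂ ⊕ ker u₃`, with
`ker u_i = range (u_j ∘ u_k)` and `ker u_i ⊆ range u_j ⊓ range u_k` for each
cyclic permutation `(i,j,k)`, hence `ker u_i = ker u_i ⊓ range u_j ⊓ range u_k`. -/
theorem stmt4 {R M : Type*} [CommRing R] [AddCommGroup M] [Module R M]
    (P : R) (hP : IsUnit P) (u₁ u₂ u₃ : M →ₗ[R] M)
    (hc12 : u₁ ∘ₗ u₂ = u₂ ∘ₗ u₁) (hc13 : u₁ ∘ₗ u₃ = u₃ ∘ₗ u₁)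
    (hc23 : u₂ ∘ₗ u₃ = u₃ ∘ₗ u₂)
    (hsum : u₁ + u₂ + u₃ = 0)
    (hquad : u₁ ∘ₗ u₂ + u₂ ∘ₗ u₃ + u₃ ∘ₗ u₁ = P • (LinearMap.id : M →ₗ[R] M))
    (hcube : u₁ ∘ₗ u₂ ∘ₗ u₃ = 0) :
    DirectSum.IsInternal ![LinearMap.ker u₁, LinearMap.ker u₂, LinearMap.ker u₃] ∧
    (LinearMap.ker u₁ = LinearMap.range (u₂ ∘ₗ u₃) ∧
     LinearMap.ker u₂ = LinearMap.range (u₃ ∘ₗ u₁) ∧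
     LinearMap.ker u₃ = LinearMap.range (u₁ ∘ₗ u₂)) ∧
    (LinearMap.ker u₁ ≤ LinearMap.range u₂ ⊓ LinearMap.range u₃ ∧
     LinearMap.ker u₂ ≤ LinearMap.range u₃ ⊓ LinearMap.range u₁ ∧
     LinearMap.ker u₃ ≤ LinearMap.range u₁ ⊓ LinearMap.range u₂) ∧
    (LinearMap.ker u₁ = LinearMap.ker u₁ ⊓ LinearMap.range u₂ ⊓ LinearMap.range u₃ ∧
     LinearMap.ker u₂ = LinearMap.ker u₂ ⊓ LinearMap.range u₃ ⊓ LinearMap.range u₁ ∧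
     LinearMap.ker u₃ = LinearMap.ker u₃ ⊓ LinearMap.range u₁ ⊓ LinearMap.range u₂) := by
  -- pointwise commutation
  have c12 : ∀ x, u₁ (u₂ x) = u₂ (u₁ x) := fun x => by
    simpa using LinearMap.congr_fun hc12 x
  have c13 : ∀ x, u₁ (u₃ x) = u₃ (u₁ x) := fun x => by
    simpa using LinearMap.congr_fun hc13 x
  have c23 : ∀ x, u₂ (u₃ x) = u₃ (u₂ x) := fun x => by
    simpa using LinearMap.congr_fun hc23 x
  have cube : ∀ x, u₁ (u₂ (u₃ x)) = 0 := fun x => by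
    simpa using LinearMap.congr_fun hcube x
  have cube2 : ∀ x, u₂ (u₃ (u₁ x)) = 0 := fun x => by
    rw [← c13, ← c12, cube]
  have cube3 : ∀ x, u₃ (u₁ (u₂ x)) = 0 := fun x => by
    rw [← c13, ← c23, cube]
  set c : R := ↑hP.unit⁻¹ with hc_def
  have hcP : c * P = 1 := hP.val_inv_mul
  have hq : ∀ x, u₁ (u₂ x) + u₂ (u₃ x) + u₃ (u₁ x) = P • x := fun x => by
    simpa using LinearMap.congr_fun hquad x
  have hid : ∀ x : M, c • u₂ (u₃ x) + c • u₃ (u₁ x) + c • u₁ (u₂ x) = x := by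
    intro x
    have h := congrArg (fun y => c • y) (hq x)
    simp only [smul_add, smul_smul, hcP, one_smul] at h
    conv_rhs => rw [← h]
    abel
  -- kernel characterizations
  have k1 : ∀ x, u₁ x = 0 → x = c • u₂ (u₃ x) := by
    intro x hx
    have h1 : u₃ (u₁ x) = 0 := by rw [hx, map_zero]
    have h2 : u₁ (u₂ x) = 0 := by rw [c12, hx, map_zero]
    have h0 := hid x
    simp only [h1, h2, smul_zero, add_zero] at h0
    exact h0.symm
  have k2 : ∀ x, u₂ x = 0 → x = c • u₃ (u₁ x) := by
    intro x hx
    have h1 : u₂ (u₃ x) = 0 := by rw [c23, hx, map_zero]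
    have h2 : u₁ (u₂ x) = 0 := by rw [hx, map_zero]
    have h0 := hid x
    simp only [h1, h2, smul_zero, zero_add, add_zero] at h0
    exact h0.symm
  have k3 : ∀ x, u₃ x = 0 → x = c • u₁ (u₂ x) := by
    intro x hx
    have h1 : u₂ (u₃ x) = 0 := by rw [hx, map_zero]
    have h2 : u₃ (u₁ x) = 0 := by rw [← c13, hx, map_zero]
    have h0 := hid x
    simp only [h1, h2, smul_zero, zero_add] at h0
    exact h0.symm
  -- kernel = range statements
  have kerEq₁ : LinearMap.ker u₁ = LinearMap.range (u₂ ∘ₗ u₃) := by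
    apply le_antisymm
    · intro x hx
      rw [LinearMap.mem_ker] at hx
      refine ⟨c • x, ?_⟩
      rw [LinearMap.comp_apply, map_smul, map_smul]
      exact (k1 x hx).symm
    · rintro x ⟨y, rfl⟩
      rw [LinearMap.mem_ker, LinearMap.comp_apply]
      exact cube y
  have kerEq₂ : LinearMap.ker u₂ = LinearMap.range (u₃ ∘ₗ u₁) := by
    apply le_antisymm
    · intro x hx
      rw [LinearMap.mem_ker] at hx
      refine ⟨c • x, ?_⟩
      rw [LinearMap.comp_apply, map_smul, map_smul]
      exact (k2 x hx).symm
    · rintro x ⟨y, rfl⟩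
      rw [LinearMap.mem_ker, LinearMap.comp_apply]
      exact cube2 y
  have kerEq₃ : LinearMap.ker u₃ = LinearMap.range (u₁ ∘ₗ u₂) := by
    apply le_antisymm
    · intro x hx
      rw [LinearMap.mem_ker] at hx
      refine ⟨c • x, ?_⟩
      rw [LinearMap.comp_apply, map_smul, map_smul]
      exact (k3 x hx).symm
    · rintro x ⟨y, rfl⟩
      rw [LinearMap.mem_ker, LinearMap.comp_apply]
      exact cube3 y
  -- range inclusions
  have hle₁ : LinearMap.ker u₁ ≤ LinearMap.range u₂ ⊓ LinearMap.range u₃ := by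
    intro x hx
    rw [LinearMap.mem_ker] at hx
    refine Submodule.mem_inf.mpr ⟨⟨c • u₃ x, ?_⟩, ⟨c • u₂ x, ?_⟩⟩
    · rw [map_smul]; exact (k1 x hx).symm
    · rw [map_smul, ← c23]; exact (k1 x hx).symm
  have hle₂ : LinearMap.ker u₂ ≤ LinearMap.range u₃ ⊓ LinearMap.range u₁ := by
    intro x hx
    rw [LinearMap.mem_ker] at hx
    refine Submodule.mem_inf.mpr ⟨⟨c • u₁ x, ?_⟩, ⟨c • u₃ x, ?_⟩⟩
    · rw [map_smul]; exact (k2 x hx).symm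
    · rw [map_smul, c13]; exact (k2 x hx).symm
  have hle₃ : LinearMap.ker u₃ ≤ LinearMap.range u₁ ⊓ LinearMap.range u₂ := by
    intro x hx
    rw [LinearMap.mem_ker] at hx
    refine Submodule.mem_inf.mpr ⟨⟨c • u₂ x, ?_⟩, ⟨c • u₁ x, ?_⟩⟩
    · rw [map_smul]; exact (k3 x hx).symm
    · rw [map_smul, ← c12]; exact (k3 x hx).symm
  -- internal direct sum
  refine ⟨?_, ⟨kerEq₁, kerEq₂, kerEq₃⟩, ⟨hle₁, hle₂, hle₃⟩,
    ⟨?_, ?_, ?_⟩⟩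
  · rw [DirectSum.isInternal_submodule_iff_iSupIndep_and_iSup_eq_top]
    constructor
    · intro i
      rw [Submodule.disjoint_def]
      intro x hxi hxs
      fin_cases i
      · simp only [Matrix.cons_val_zero, LinearMap.mem_ker] at hxi
        have hsle : (⨆ j, ⨆ (_ : j ≠ (0 : Fin 3)),
            ![LinearMap.ker u₁, LinearMap.ker u₂, LinearMap.ker u₃] j) ≤
            LinearMap.ker (u₂ ∘ₗ u₃) := by
          refine iSup_le fun j => iSup_le fun hj => ?_
          fin_cases j
          · exact absurd rfl hj
          · intro y hy
            simp only [Matrix.cons_val_one, Matrix.head_cons, LinearMap.mem_ker] at hy ⊢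
            rw [LinearMap.comp_apply, c23, hy, map_zero]
          · intro y hy
            have hy3 : u₃ y = 0 := hy
            rw [LinearMap.mem_ker, LinearMap.comp_apply, hy3, map_zero]
        have h0 : u₂ (u₃ x) = 0 := by
          have := hsle hxs
          rwa [LinearMap.mem_ker, LinearMap.comp_apply] at this
        rw [k1 x hxi, h0, smul_zero]
      · simp only [Matrix.cons_val_one, Matrix.head_cons, LinearMap.mem_ker] at hxi
        have hsle : (⨆ j, ⨆ (_ : j ≠ (1 : Fin 3)),
            ![LinearMap.ker u₁, LinearMap.ker u₂, LinearMap.ker u₃] j) ≤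
            LinearMap.ker (u₃ ∘ₗ u₁) := by
          refine iSup_le fun j => iSup_le fun hj => ?_
          fin_cases j
          · intro y hy
            simp only [Matrix.cons_val_zero, LinearMap.mem_ker] at hy ⊢
            rw [LinearMap.comp_apply, hy, map_zero]
          · exact absurd rfl hj
          · intro y hy
            have hy3 : u₃ y = 0 := hy
            rw [LinearMap.mem_ker, LinearMap.comp_apply, ← c13, hy3, map_zero]
        have h0 : u₃ (u₁ x) = 0 := by
          have := hsle hxs
          rwa [LinearMap.mem_ker, LinearMap.comp_apply] at this
        rw [k2 x hxi, h0, smul_zero]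
      · have hxi3 : u₃ x = 0 := hxi
        have hsle : (⨆ j, ⨆ (_ : j ≠ (2 : Fin 3)),
            ![LinearMap.ker u₁, LinearMap.ker u₂, LinearMap.ker u₃] j) ≤
            LinearMap.ker (u₁ ∘ₗ u₂) := by
          refine iSup_le fun j => iSup_le fun hj => ?_
          fin_cases j
          · intro y hy
            simp only [Matrix.cons_val_zero, LinearMap.mem_ker] at hy ⊢
            rw [LinearMap.comp_apply, c12, hy, map_zero]
          · intro y hy
            simp only [Matrix.cons_val_one, Matrix.head_cons, LinearMap.mem_ker] at hy ⊢
            rw [LinearMap.comp_apply, hy, map_zero]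
          · exact absurd rfl hj
        have h0 : u₁ (u₂ x) = 0 := by
          have := hsle hxs
          rwa [LinearMap.mem_ker, LinearMap.comp_apply] at this
        rw [k3 x hxi3, h0, smul_zero]
    · rw [eq_top_iff]
      intro x _
      have m1 : c • u₂ (u₃ x) ∈ LinearMap.ker u₁ := by
        rw [LinearMap.mem_ker, map_smul, cube, smul_zero]
      have m2 : c • u₃ (u₁ x) ∈ LinearMap.ker u₂ := by
        rw [LinearMap.mem_ker, map_smul, cube2, smul_zero]
      have m3 : c • u₁ (u₂ x) ∈ LinearMap.ker u₃ := by
        rw [LinearMap.mem_ker, map_smul, cube3, smul_zero]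
      rw [← hid x]
      refine add_mem (add_mem ?_ ?_) ?_
      · exact Submodule.mem_iSup_of_mem 0 m1
      · exact Submodule.mem_iSup_of_mem 1 m2
      · exact Submodule.mem_iSup_of_mem 2 m3
  · rw [inf_assoc]; exact (inf_eq_left.mpr hle₁).symm
  · rw [inf_assoc]; exact (inf_eq_left.mpr hle₂).symm
  · rw [inf_assoc]; exact (inf_eq_left.mpr hle₃).symm
end

section
/- Let R' be a commutative ring, P a unit of R', M an R'-module, and u₁, u₂, u₃ pairwise commuting R'-linear endomorphisms of M satisfying the vertex relations u₁ + u₂ + u₃ = 0, u₁u₂ + u₂u₃ + u₃u₁ = P•id_M, and u₁u₂u₃ = 0. Then ker(u_i) ∩ ker(u_j) = 0 for all i ≠ j, and range(u₁) ∩ range(u₂) ∩ range(u₃) = 0. -/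
/-- Under the vertex relations with a unit `P`, the kernels of
distinct `u_i` intersect trivially, and the intersection of the three ranges
is trivial. -/
theorem stmt5 {R M : Type*} [CommRing R] [AddCommGroup M] [Module R M]
    (P : R) (hP : IsUnit P) (u₁ u₂ u₃ : M →ₗ[R] M)
    (hc12 : u₁ ∘ₗ u₂ = u₂ ∘ₗ u₁) (hc13 : u₁ ∘ₗ u₃ = u₃ ∘ₗ u₁)
    (hc23 : u₂ ∘ₗ u₃ = u₃ ∘ₗ u₂)
    (hsum : u₁ + u₂ + u₃ = 0)
    (hquad : u₁ ∘ₗ u₂ + u₂ ∘ₗ u₃ + u₃ ∘ₗ u₁ = P • (LinearMap.id : M →ₗ[R] M))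
    (hcube : u₁ ∘ₗ u₂ ∘ₗ u₃ = 0) :
    (LinearMap.ker u₁ ⊓ LinearMap.ker u₂ = ⊥ ∧
     LinearMap.ker u₂ ⊓ LinearMap.ker u₃ = ⊥ ∧
     LinearMap.ker u₁ ⊓ LinearMap.ker u₃ = ⊥) ∧
    LinearMap.range u₁ ⊓ LinearMap.range u₂ ⊓ LinearMap.range u₃ = ⊥ := by
  have c12 : ∀ x, u₁ (u₂ x) = u₂ (u₁ x) := fun x => LinearMap.congr_fun hc12 x
  have c13 : ∀ x, u₁ (u₃ x) = u₃ (u₁ x) := fun x => LinearMap.congr_fun hc13 x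
  have c23 : ∀ x, u₂ (u₃ x) = u₃ (u₂ x) := fun x => LinearMap.congr_fun hc23 x
  have quad : ∀ x, u₁ (u₂ x) + u₂ (u₃ x) + u₃ (u₁ x) = P • x := fun x => by
    simpa using LinearMap.congr_fun hquad x
  have cube : ∀ x, u₁ (u₂ (u₃ x)) = 0 := fun x => by
    simpa using LinearMap.congr_fun hcube x
  have cancel : ∀ x : M, P • x = 0 → x = 0 := fun x hx => by
    have := congrArg (fun y => (↑hP.unit⁻¹ : R) • y) hx
    simpa [smul_smul] using this
  refine ⟨⟨?_, ?_, ?_⟩, ?_⟩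
  · rw [eq_bot_iff]
    rintro x ⟨h1, h2⟩
    simp only [SetLike.mem_coe, LinearMap.mem_ker] at h1 h2
    have := quad x
    rw [h2, h1, map_zero, map_zero, c23, h2, map_zero] at this
    exact cancel x (by simpa using this.symm)
  · rw [eq_bot_iff]
    rintro x ⟨h2, h3⟩
    simp only [SetLike.mem_coe, LinearMap.mem_ker] at h2 h3
    have := quad x
    rw [h2, h3, map_zero, map_zero, ← c13, h3, map_zero] at this
    exact cancel x (by simpa using this.symm)
  · rw [eq_bot_iff]
    rintro x ⟨h1, h3⟩
    simp only [SetLike.mem_coe, LinearMap.mem_ker] at h1 h3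
    have := quad x
    rw [h1, h3, map_zero, map_zero, c12, h1, map_zero] at this
    exact cancel x (by simpa using this.symm)
  · rw [eq_bot_iff]
    rintro x ⟨⟨⟨a, ha⟩, ⟨b, hb⟩⟩, ⟨c, hc⟩⟩
    have := quad x
    have e1 : u₁ (u₂ x) = 0 := by rw [← hc]; exact cube c
    have e2 : u₂ (u₃ x) = 0 := by
      rw [← ha, ← c13, ← c12]; exact cube a
    have e3 : u₃ (u₁ x) = 0 := by
      rw [← c13, ← hb, ← c23]; exact cube b
    rw [e1, e2, e3] at this
    simpa using cancel x (by simpa using this.symm)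
end

section
/- Let R' be a commutative ring in which 2 = 0, P a unit of R', M an R'-module, and u₁, u₂, u₃ pairwise commuting R'-linear endomorphisms of M such that u₁ + u₂ + u₃ = 0 and u_i^3 + P*u_i = 0 for each i. Then every element x of range(u₁) ∩ range(u₂) ∩ range(u₃) satisfies P • x = 0; in particular, since P is a unit, range(u₁) ∩ range(u₂) ∩ range(u₃) = 0. -/
/-- Over a commutative ring with `2 = 0`, if `u₁ + u₂ + u₃ = 0`
and each `u_i` satisfies `u_i^3 + P•u_i = 0` with `P` a unit, then every
element of `range u₁ ⊓ range u₂ ⊓ range u₃` is annihilated by `P`, hence this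
intersection is trivial. -/
theorem stmt6 {R M : Type*} [CommRing R] [AddCommGroup M] [Module R M]
    (hchar : (2 : R) = 0)
    (P : R) (hP : IsUnit P) (u₁ u₂ u₃ : M →ₗ[R] M)
    (hc12 : u₁ ∘ₗ u₂ = u₂ ∘ₗ u₁) (hc13 : u₁ ∘ₗ u₃ = u₃ ∘ₗ u₁)
    (hc23 : u₂ ∘ₗ u₃ = u₃ ∘ₗ u₂)
    (hsum : u₁ + u₂ + u₃ = 0)
    (hcube₁ : u₁ ∘ₗ u₁ ∘ₗ u₁ + P • u₁ = 0)
    (hcube₂ : u₂ ∘ₗ u₂ ∘ₗ u₂ + P • u₂ = 0)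
    (hcube₃ : u₃ ∘ₗ u₃ ∘ₗ u₃ + P • u₃ = 0) :
    (∀ x ∈ LinearMap.range u₁ ⊓ LinearMap.range u₂ ⊓ LinearMap.range u₃,
      P • x = 0) ∧
    LinearMap.range u₁ ⊓ LinearMap.range u₂ ⊓ LinearMap.range u₃ = ⊥ := by
  have hab : u₁ * u₂ = u₂ * u₁ := hc12
  have h13 : u₁ * u₃ = u₃ * u₁ := hc13
  have h23 : u₂ * u₃ = u₃ * u₂ := hc23
  have hA2 : (2 : Module.End R M) = 0 := by
    have : ((2:R) • (1 : Module.End R M)) = 2 • 1 := by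
      rw [two_smul, two_smul]
    rw [hchar, zero_smul] at this
    simpa using this.symm
  have hA3 : (3 : Module.End R M) = 1 := by
    have : (3 : Module.End R M) = 2 + 1 := by norm_num
    rw [this, hA2, zero_add]
  have h1 : u₁^3 + P • u₁ = 0 := by
    have : u₁ ∘ₗ u₁ ∘ₗ u₁ = u₁^3 := by rw [pow_succ, pow_two]; rfl
    rwa [this] at hcube₁
  have h2 : u₂^3 + P • u₂ = 0 := by
    have : u₂ ∘ₗ u₂ ∘ₗ u₂ = u₂^3 := by rw [pow_succ, pow_two]; rfl
    rwa [this] at hcube₂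
  have hc : u₃ = -(u₁ + u₂) := eq_neg_of_add_eq_zero_right hsum
  have h3 : (u₁ + u₂)^3 + P • (u₁ + u₂) = 0 := by
    have e : u₃ ∘ₗ u₃ ∘ₗ u₃ = u₃^3 := by rw [pow_succ, pow_two]; rfl
    rw [e, hc, Odd.neg_pow (⟨1, by norm_num⟩ : Odd 3), smul_neg, ← neg_add,
      neg_eq_zero] at hcube₃
    exact hcube₃
  have hexp : (u₁ + u₂)^3
      = u₁^3 + u₂^3 + 3 * (u₁^2 * u₂) + 3 * (u₁ * u₂^2) := by
    have := (Commute.add_pow (x := u₁) (y := u₂) hab 3)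
    simp [Finset.sum_range_succ, pow_succ, pow_zero] at this ⊢
    rw [this]
    noncomm_ring
  have h4 : u₁^2 * u₂ + u₁ * u₂^2 = 0 := by
    have e : (u₁^3 + P • u₁) + (u₂^3 + P • u₂) + (u₁^2 * u₂ + u₁ * u₂^2) = 0 := by
      rw [hexp, smul_add] at h3
      calc (u₁^3 + P • u₁) + (u₂^3 + P • u₂) + (u₁^2 * u₂ + u₁ * u₂^2)
          = u₁^3 + u₂^3 + 1 * (u₁^2 * u₂) + 1 * (u₁ * u₂^2) + (P • u₁ + P • u₂) := by
            rw [one_mul, one_mul]; abel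
        _ = u₁^3 + u₂^3 + 3 * (u₁^2 * u₂) + 3 * (u₁ * u₂^2) + (P • u₁ + P • u₂) := by
            rw [hA3]
        _ = 0 := h3
    rwa [h1, h2, zero_add, zero_add] at e
  have key : u₁ * u₂ * u₃ = 0 := by
    rw [hc, mul_neg, neg_eq_zero, mul_add]
    calc u₁ * u₂ * u₁ + u₁ * u₂ * u₂
        = u₁^2 * u₂ + u₁ * u₂^2 := by
          rw [mul_assoc u₁ u₂ u₁, ← hab, ← mul_assoc, ← pow_two,
            mul_assoc u₁ u₂ u₂, ← pow_two]
      _ = 0 := h4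
  have k1 : u₂ * u₁ * u₃ = 0 := by rw [← hab]; exact key
  have k2 : u₃ * (u₁ * u₂) = 0 := by
    rw [← mul_assoc, ← h13, mul_assoc, ← h23, ← mul_assoc]; exact key
  have hu1 : u₁ = -(u₂ + u₃) := by
    rw [add_assoc] at hsum
    exact eq_neg_of_add_eq_zero_left hsum
  have main : ∀ x ∈ LinearMap.range u₁ ⊓ LinearMap.range u₂ ⊓ LinearMap.range u₃,
      P • x = 0 := by
    rintro x ⟨⟨⟨a, ha⟩, b, hb⟩, c, hcx⟩
    have hx1 : u₂ (u₁ x) = 0 := by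
      have := DFunLike.congr_fun k1 c
      simpa [Module.End.mul_apply, hcx] using this
    have hx2 : u₃ (u₁ x) = 0 := by
      have := DFunLike.congr_fun k2 b
      simpa [Module.End.mul_apply, hb] using this
    have e1 : u₁ (u₁ x) + P • x = 0 := by
      have := DFunLike.congr_fun hcube₁ a
      simpa [LinearMap.comp_apply, ha] using this
    have e2 : u₁ (u₁ x) = 0 := by
      nth_rewrite 1 [hu1]
      simp [hx1, hx2]
    rwa [e2, zero_add] at e1
  refine ⟨main, ?_⟩
  rw [eq_bot_iff]
  intro x hx
  have hPx := main x hx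
  obtain ⟨p, rfl⟩ := hP
  have : x = 0 := by
    have := congrArg (fun y => (↑p⁻¹ : R) • y) hPx
    simpa [smul_smul] using this
  simpa [Submodule.mem_bot] using this
end

section
/- Let R be a commutative integral domain with fraction field K, let k be a field, and let φ : R → k be a ring homomorphism. Let C be a finite free R-module and ∂ : C → C an R-linear map with ∂ ∘ ∂ = 0. Then dim_k ( ker(∂_k) / range(∂_k) ) ≥ dim_K ( ker(∂_K) / range(∂_K) ), where ∂_k and ∂_K denote the endomorphisms of C ⊗_R k and C ⊗_R K obtained from ∂ by base change along φ and along the canonical map R → K respectively. -/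
/-- The homology of a differential module `(C, ∂)`: `ker ∂` modulo `range ∂`
(pulled back to a submodule of `ker ∂`). -/
noncomputable def homologyOf {S C : Type*} [CommRing S] [AddCommGroup C] [Module S C]
    (d : C →ₗ[S] C) : Type _ :=
  (LinearMap.ker d) ⧸ ((LinearMap.range d).comap (LinearMap.ker d).subtype)

noncomputable instance {S C : Type*} [CommRing S] [AddCommGroup C] [Module S C]
    (d : C →ₗ[S] C) : AddCommGroup (homologyOf d) :=
  inferInstanceAs (AddCommGroup
    ((LinearMap.ker d) ⧸ ((LinearMap.range d).comap (LinearMap.ker d).subtype)))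

noncomputable instance {S C : Type*} [CommRing S] [AddCommGroup C] [Module S C]
    (d : C →ₗ[S] C) : Module S (homologyOf d) :=
  inferInstanceAs (Module S
    ((LinearMap.ker d) ⧸ ((LinearMap.range d).comap (LinearMap.ker d).subtype)))


/-! Over a field, the homology of a square-zero endomorphism of `V` has dimension
`dim V - 2 rank ∂`, so it suffices to show that the rank of the matrix of `∂` can only drop
under `R → k`. A nonvanishing `r × r` minor of the matrix over `k` is the image of a nonzero
minor over `R`, which stays nonzero in the fraction field. -/

open Module

namespace Matrix

variable {F m n : Type*} [Field F] [Fintype m] [Fintype n]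

theorem exists_submatrix_det_ne_zero_of_linearIndependent_col {κ : Type*} [Fintype κ]
    [DecidableEq κ] {B : Matrix m κ F} (hB : LinearIndependent F B.col) :
    ∃ r : κ → m, (B.submatrix r id).det ≠ 0 := by
  obtain ⟨ι, r, hr, hspan, hli⟩ := exists_linearIndependent' F B.row
  have := Finite.of_injective r hr
  have : Fintype ι := Fintype.ofFinite ι
  have hcard : Fintype.card κ = Fintype.card ι := by
    rw [← finrank_span_eq_card hB, ← rank_eq_finrank_span_cols, rank_eq_finrank_span_row,
      ← hspan, finrank_span_eq_card hli]
  let e : κ ≃ ι := Fintype.equivOfCardEq hcard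
  have hrows : LinearIndependent F (B.submatrix (r ∘ e) id).row := hli.comp e e.injective
  exact ⟨r ∘ e,
    ((isUnit_iff_isUnit_det _).mp (linearIndependent_rows_iff_isUnit.mp hrows)).ne_zero⟩

theorem exists_submatrix_det_ne_zero (A : Matrix m n F) :
    ∃ (r : Fin A.rank → m) (c : Fin A.rank → n), (A.submatrix r c).det ≠ 0 := by
  classical
  obtain ⟨κ, c, hc, hspan, hli⟩ := exists_linearIndependent' F A.col
  have := Finite.of_injective c hc
  have : Fintype κ := Fintype.ofFinite κ
  have hcard : A.rank = Fintype.card κ := by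
    rw [rank_eq_finrank_span_cols, ← hspan, finrank_span_eq_card hli]
  obtain ⟨r, hr⟩ :=
    exists_submatrix_det_ne_zero_of_linearIndependent_col (B := A.submatrix id c) hli
  let e : Fin A.rank ≃ κ := (Fintype.equivFinOfCardEq hcard.symm).symm
  refine ⟨r ∘ e, c ∘ e, ?_⟩
  rwa [← submatrix_submatrix, det_submatrix_equiv_self]

theorem rank_map_le_rank_map {R K L : Type*} [CommRing R] [Field K] [Field L] (f : R →+* K)
    {g : R →+* L} (hg : Function.Injective g) (A : Matrix m n R) :
    (A.map f).rank ≤ (A.map g).rank := by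
  obtain ⟨r, c, hdet⟩ := (A.map f).exists_submatrix_det_ne_zero
  have hdetR : (A.submatrix r c).det ≠ 0 := fun h ↦ hdet <| by
    rw [submatrix_map, ← RingHom.mapMatrix_apply, ← RingHom.map_det, h, map_zero]
  have hdetL : ((A.map g).submatrix r c).det ≠ 0 := by
    rw [submatrix_map, ← RingHom.mapMatrix_apply, ← RingHom.map_det]
    exact (map_ne_zero_iff g hg).mpr hdetR
  calc (A.map f).rank = ((A.map g).submatrix r c).rank := by
        rw [rank_of_det_ne_zero hdetL, Fintype.card_fin]
    _ ≤ (A.map g).rank := rank_submatrix_le _ _ _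

end Matrix

theorem finrank_homologyOf_add_two_mul_finrank_range {F V : Type*} [Field F] [AddCommGroup V]
    [Module F V] [FiniteDimensional F V] (f : V →ₗ[F] V) (hf : f ∘ₗ f = 0) :
    finrank F (homologyOf f) + 2 * finrank F (LinearMap.range f) = finrank F V := by
  have hquot : finrank F (homologyOf f) +
      finrank F ((LinearMap.range f).comap (LinearMap.ker f).subtype) =
      finrank F (LinearMap.ker f) :=
    Submodule.finrank_quotient_add_finrank _
  have hboundaries : finrank F ((LinearMap.range f).comap (LinearMap.ker f).subtype) =
      finrank F (LinearMap.range f) :=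
    (Submodule.comapSubtypeEquivOfLe (LinearMap.range_le_ker_iff.mpr hf)).finrank_eq
  have := LinearMap.finrank_range_add_finrank_ker f
  omega

theorem LinearMap.finrank_range_baseChange {R S M N ι ι' : Type*} [CommRing R] [Field S]
    [Algebra R S] [AddCommGroup M] [Module R M] [AddCommGroup N] [Module R N] [Fintype ι]
    [DecidableEq ι] [Fintype ι'] (b : Basis ι R M) (b' : Basis ι' R N) (f : M →ₗ[R] N) :
    finrank S (range (f.baseChange S)) = ((toMatrix b b' f).map (algebraMap R S)).rank := by
  rw [← toMatrix_baseChange, Matrix.rank_eq_finrank_range_toLin _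
    (Algebra.TensorProduct.basis S b') (Algebra.TensorProduct.basis S b), Matrix.toLin_toMatrix]

theorem finrank_homologyOf_baseChange {R S C ι : Type*} [CommRing R] [Field S] [Algebra R S]
    [AddCommGroup C] [Module R C] [Fintype ι] [DecidableEq ι] (b : Basis ι R C)
    (d : C →ₗ[R] C) (hd : d ∘ₗ d = 0) :
    finrank S (homologyOf (d.baseChange S)) +
      2 * ((LinearMap.toMatrix b b d).map (algebraMap R S)).rank = Fintype.card ι := by
  have := Module.Finite.of_basis (Algebra.TensorProduct.basis S b)
  rw [← LinearMap.finrank_range_baseChange,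
    ← finrank_eq_card_basis (Algebra.TensorProduct.basis S b)]
  exact finrank_homologyOf_add_two_mul_finrank_range _ <| by
    rw [← LinearMap.baseChange_comp, hd, LinearMap.baseChange_zero]

/-- For a finite free module `C` over a domain `R` with fraction
field `K`, a differential `∂` with `∂ ∘ ∂ = 0`, and a ring homomorphism
(`R`-algebra structure) `φ : R → k` to a field `k`, the `k`-dimension of the
homology of the base change of `∂` to `k` is at least the `K`-dimension of the
homology of the base change to `K`. -/
theorem stmt8 {R : Type*} [CommRing R] [IsDomain R]
    (k : Type*) [Field k] [Algebra R k]
    {C : Type*} [AddCommGroup C] [Module R C] [Module.Free R C] [Module.Finite R C]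
    (d : C →ₗ[R] C) (hd : d ∘ₗ d = 0) :
    Module.finrank (FractionRing R)
        (homologyOf (LinearMap.baseChange (FractionRing R) d)) ≤
      Module.finrank k (homologyOf (LinearMap.baseChange k d)) := by
  let b := Module.Free.chooseBasis R C
  have hk := finrank_homologyOf_baseChange (S := k) b d hd
  have hK := finrank_homologyOf_baseChange (S := FractionRing R) b d hd
  have hrank := (LinearMap.toMatrix b b d).rank_map_le_rank_map (algebraMap R k)
    (IsFractionRing.injective R (FractionRing R))
  omega
end

section
/- In the group algebra R = 𝔽₂[ℤ³], the element P = T₁T₂T₃ + T₁T₂⁻¹T₃⁻¹ + T₁⁻¹T₂T₃⁻¹ + T₁⁻¹T₂⁻¹T₃ is nonzero and lies in the fourth power m⁴ of the augmentation ideal m = ker(ε), where ε : R → 𝔽₂ is the augmentation homomorphism sending each T_i to 1. -/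
/-- The group algebra `R = 𝔽₂[ℤ³]`. -/
abbrev GroupAlgZ3 : Type := AddMonoidAlgebra (ZMod 2) (Fin 3 → ℤ)

/-- The invertible generator `T_i` of `𝔽₂[ℤ³]`, the image of the `i`-th
standard basis vector of `ℤ³`. -/
noncomputable def Tgen (i : Fin 3) : GroupAlgZ3 :=
  AddMonoidAlgebra.single (Pi.single i (1 : ℤ)) 1

/-- The inverse `T_i⁻¹`. -/
noncomputable def TgenInv (i : Fin 3) : GroupAlgZ3 :=
  AddMonoidAlgebra.single (Pi.single i (-1 : ℤ)) 1

/-- The augmentation homomorphism `ε : 𝔽₂[ℤ³] → 𝔽₂` sending every group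
element (in particular each `T_i`) to `1`. -/
noncomputable def augEps : GroupAlgZ3 →ₐ[ZMod 2] ZMod 2 :=
  AddMonoidAlgebra.lift (ZMod 2) (ZMod 2) (Fin 3 → ℤ) 1

/-! In characteristic 2, `T₁T₂T₃ · P = (T₁T₂T₃ + T₁ + T₂ + T₃)²` by the Frobenius, and
`T₁T₂T₃ + T₁ + T₂ + T₃` is the sum of the products of at least two of the `Tᵢ - 1`, hence lies
in `m²`. So `P` lies in `m⁴`. It is nonzero because its coefficient at `(1, 1, 1)` is `1`. -/

namespace CharTwo

variable {R : Type*} [CommRing R] [CharP R 2]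

theorem mul_mul_add_add_add_mem_sq {I : Ideal R} {x y z : R}
    (hx : x - 1 ∈ I) (hy : y - 1 ∈ I) (hz : z - 1 ∈ I) :
    x * y * z + x + y + z ∈ I ^ 2 := by
  have expand : x * y * z + x + y + z =
      (x - 1) * (y - 1) * (z - 1) + (x - 1) * (y - 1) + (x - 1) * (z - 1) + (y - 1) * (z - 1) := by
    linear_combination (x + y + z - 1) * (two_eq_zero : (2 : R) = 0)
  rw [expand, sq]
  have hxy := Ideal.mul_mem_mul hx hy
  exact add_mem (add_mem (add_mem (Ideal.mul_mem_right _ _ hxy) hxy)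
    (Ideal.mul_mem_mul hx hz)) (Ideal.mul_mem_mul hy hz)

theorem mul_mul_add_mul_mul_add_eq_mul_sq {x y z u v w : R}
    (hx : x * u = 1) (hy : y * v = 1) (hz : z * w = 1) :
    x * y * z + x * v * w + u * y * w + u * v * z = u * v * w * (x * y * z + x + y + z) ^ 2 := by
  simp only [add_sq, mul_pow]
  linear_combination (-(x * y * z * y * v * z * w + x * v * w)) * hx
    - (x * y * z * z * w + u * y * w) * hy - (x * y * z + u * v * z) * hz

end CharTwo

instance : CharP GroupAlgZ3 2 := charP_of_injective_algebraMap' (ZMod 2) 2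

theorem Tgen_mul_TgenInv (i : Fin 3) : Tgen i * TgenInv i = 1 := by
  simp [Tgen, TgenInv, AddMonoidAlgebra.single_mul_single, ← Pi.single_add,
    AddMonoidAlgebra.one_def]

theorem Tgen_sub_one_mem_ker_augEps (i : Fin 3) :
    Tgen i - 1 ∈ RingHom.ker (augEps : GroupAlgZ3 →+* ZMod 2) := by
  simp [RingHom.mem_ker, augEps, Tgen, AddMonoidAlgebra.lift_single]

/-- the element
`P = T₁T₂T₃ + T₁T₂⁻¹T₃⁻¹ + T₁⁻¹T₂T₃⁻¹ + T₁⁻¹T₂⁻¹T₃` of `𝔽₂[ℤ³]` is nonzero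
and lies in the fourth power of the augmentation ideal `m = ker ε`. -/
theorem stmt11 :
    (Tgen 0 * Tgen 1 * Tgen 2 + Tgen 0 * TgenInv 1 * TgenInv 2 +
        TgenInv 0 * Tgen 1 * TgenInv 2 + TgenInv 0 * TgenInv 1 * Tgen 2) ≠ 0 ∧
    (Tgen 0 * Tgen 1 * Tgen 2 + Tgen 0 * TgenInv 1 * TgenInv 2 +
        TgenInv 0 * Tgen 1 * TgenInv 2 + TgenInv 0 * TgenInv 1 * Tgen 2) ∈
      (RingHom.ker (augEps : GroupAlgZ3 →+* ZMod 2)) ^ 4 := by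
  constructor
  · intro h
    have coeff_one := congrArg (AddMonoidAlgebra.coeff · (fun _ => 1)) h
    simp only [Tgen, TgenInv, AddMonoidAlgebra.single_mul_single, AddMonoidAlgebra.coeff_add,
      AddMonoidAlgebra.coeff_single, AddMonoidAlgebra.coeff_zero, Finsupp.add_apply,
      Finsupp.single_apply, Finsupp.coe_zero, Pi.zero_apply] at coeff_one
    revert coeff_one
    decide
  · rw [CharTwo.mul_mul_add_mul_mul_add_eq_mul_sq (Tgen_mul_TgenInv 0) (Tgen_mul_TgenInv 1)
      (Tgen_mul_TgenInv 2), show 4 = 2 * 2 from rfl, pow_mul]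
    exact Ideal.mul_mem_left _ _ <| Ideal.pow_mem_pow (CharTwo.mul_mul_add_add_add_mem_sq
      (Tgen_sub_one_mem_ker_augEps 0) (Tgen_sub_one_mem_ker_augEps 1)
      (Tgen_sub_one_mem_ker_augEps 2)) 2
end

section
/- Let F be the field of fractions of the polynomial ring 𝔽₂[z₁, z₂, z₃], and work in the formal power series ring F[[t]]. The elements f_i = 1 + z_i t (i = 1, 2, 3) are units of F[[t]]. Set P_S = f₁f₂f₃ + f₁f₂⁻¹f₃⁻¹ + f₁⁻¹f₂f₃⁻¹ + f₁⁻¹f₂⁻¹f₃. Then the coefficients of t⁰, t¹, t², t³ in P_S all vanish, and the coefficient of t⁴ in P_S equals z₁²z₂² + z₂²z₃² + z₃²z₁²; that is, P_S = (z₁²z₂² + z₂²z₃² + z₃²z₁²) t⁴ + O(t⁵). -/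
/-!
In characteristic `2` squaring is additive, so `fᵢ² = 1 + zᵢ² t²`. Multiplying `P_S` by the unit
`f₁f₂f₃` gives `(f₁f₂f₃)² + f₁² + f₂² + f₃²`, in which everything of degree `< 4` cancels:
it equals `t⁴ (e₂ + e₃ t²)` with `e₂, e₃` the elementary symmetric functions of the `zᵢ²`.
As `f₁f₂f₃` has constant coefficient `1`, dividing by it leaves `P_S ≡ e₂ t⁴ mod t⁵`.
-/

open PowerSeries

section EvenSignSum

variable {S : Type*} [CommRing S]

/-- The Laurent polynomial `P` evaluated at `(u, v, w)`; `Ring.inverse` is `0` off the units. -/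
noncomputable def evenSignSum (u v w : S) : S :=
  u * v * w + u * Ring.inverse v * Ring.inverse w + Ring.inverse u * v * Ring.inverse w +
    Ring.inverse u * Ring.inverse v * w

theorem evenSignSum_mul {u v w : S} (hu : IsUnit u) (hv : IsUnit v) (hw : IsUnit w) :
    evenSignSum u v w * (u * v * w) = (u * v * w) ^ 2 + u ^ 2 + v ^ 2 + w ^ 2 := by
  have hu' := Ring.mul_inverse_cancel u hu
  have hv' := Ring.mul_inverse_cancel v hv
  have hw' := Ring.mul_inverse_cancel w hw
  unfold evenSignSum
  linear_combination (v ^ 2 * w * Ring.inverse w + w ^ 2 * v * Ring.inverse v) * hu'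
    + (u ^ 2 * w * Ring.inverse w + w ^ 2) * hv' + (u ^ 2 + v ^ 2) * hw'

end EvenSignSum

namespace PowerSeries

variable {R : Type*} [CommRing R]

theorem isUnit_one_add_C_mul_X (a : R) : IsUnit (1 + C a * X) := by
  simp [isUnit_iff_constantCoeff]

theorem coeff_eq_of_mul_eq_X_pow_mul {p d q : R⟦X⟧} {k : ℕ} (hd : constantCoeff d = 1)
    (h : p * d = X ^ k * q) : (∀ n < k, coeff n p = 0) ∧ coeff k p = constantCoeff q := by
  obtain ⟨e, hde⟩ := (isUnit_iff_constantCoeff.mpr (hd ▸ isUnit_one)).exists_right_inv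
  have he : constantCoeff e = 1 := by
    simpa [hd] using congrArg constantCoeff hde
  have hp : p = X ^ k * (q * e) := by
    rw [← mul_assoc, ← h, mul_assoc, hde, mul_one]
  refine ⟨fun n hn => ?_, ?_⟩
  · rw [hp, coeff_X_pow_mul', if_neg (by omega)]
  · rw [hp, coeff_X_pow_mul', if_pos le_rfl, Nat.sub_self, coeff_zero_eq_constantCoeff_apply,
      map_mul, he, mul_one]

instance instCharP (p : ℕ) [CharP R p] : CharP R⟦X⟧ p :=
  charP_of_injective_ringHom C_injective p

variable [CharP R 2]

theorem one_add_C_mul_X_sq (a : R) : (1 + C a * X) ^ 2 = 1 + C (a ^ 2) * X ^ 2 := by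
  rw [CharTwo.add_sq, one_pow, mul_pow, map_pow]

theorem evenSignSum_one_add_C_mul_X_mul (a b c : R) :
    evenSignSum (1 + C a * X) (1 + C b * X) (1 + C c * X) *
        ((1 + C a * X) * (1 + C b * X) * (1 + C c * X)) =
      X ^ 4 * (C (a ^ 2 * b ^ 2 + b ^ 2 * c ^ 2 + c ^ 2 * a ^ 2) +
        C (a ^ 2 * b ^ 2 * c ^ 2) * X ^ 2) := by
  rw [evenSignSum_mul (isUnit_one_add_C_mul_X a) (isUnit_one_add_C_mul_X b)
    (isUnit_one_add_C_mul_X c), mul_pow, mul_pow, one_add_C_mul_X_sq, one_add_C_mul_X_sq,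
    one_add_C_mul_X_sq]
  simp only [map_add, map_mul, map_pow]
  linear_combination (2 + (C a ^ 2 + C b ^ 2 + C c ^ 2) * X ^ 2) *
    (CharTwo.two_eq_zero : (2 : R⟦X⟧) = 0)

end PowerSeries

/-- In `F[[t]]` with `F = Frac(𝔽₂[z₁,z₂,z₃])`, the elements
`f_i = 1 + z_i t` are units, and
`P_S = f₁f₂f₃ + f₁f₂⁻¹f₃⁻¹ + f₁⁻¹f₂f₃⁻¹ + f₁⁻¹f₂⁻¹f₃` has vanishing
coefficients in degrees `≤ 3` and coefficient
`z₁²z₂² + z₂²z₃² + z₃²z₁²` in degree `4`. -/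
theorem stmt12 :
    let F := FractionRing (MvPolynomial (Fin 3) (ZMod 2))
    let z : Fin 3 → F := fun i =>
      algebraMap (MvPolynomial (Fin 3) (ZMod 2)) F (MvPolynomial.X i)
    let f : Fin 3 → PowerSeries F := fun i =>
      1 + PowerSeries.C (z i) * PowerSeries.X
    let PS : PowerSeries F :=
      f 0 * f 1 * f 2 + f 0 * Ring.inverse (f 1) * Ring.inverse (f 2) +
        Ring.inverse (f 0) * f 1 * Ring.inverse (f 2) +
        Ring.inverse (f 0) * Ring.inverse (f 1) * f 2
    (∀ i, IsUnit (f i)) ∧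
    (∀ n : ℕ, n ≤ 3 → PowerSeries.coeff (R := F) n PS = 0) ∧
    PowerSeries.coeff (R := F) 4 PS =
      z 0 ^ 2 * z 1 ^ 2 + z 1 ^ 2 * z 2 ^ 2 + z 2 ^ 2 * z 0 ^ 2 := by
  intro F z f PS
  obtain ⟨hlow, h4⟩ := coeff_eq_of_mul_eq_X_pow_mul (by simp)
    (evenSignSum_one_add_C_mul_X_mul (z 0) (z 1) (z 2))
  refine ⟨fun i => isUnit_one_add_C_mul_X (z i), fun n hn => hlow n (by omega), ?_⟩
  exact h4.trans (by simp)
end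

section
/- Let R = 𝔽₂[ℤ³] be the group algebra over 𝔽₂ of ℤ³, with augmentation homomorphism ε : R → 𝔽₂ sending each T_i to 1. Let C be a finite free R-module and ∂ : C → C an R-linear map with ∂ ∘ ∂ = 0. If ker(∂) = range(∂) (i.e., the homology of the differential module (C, ∂) vanishes), then the base-changed differential ∂̄ on C ⊗_{R,ε} 𝔽₂ also satisfies ker(∂̄) = range(∂̄), i.e., the homology of (C ⊗_{R,ε} 𝔽₂, ∂̄) vanishes. -/
/-- `𝔽₂` as an `𝔽₂[ℤ³]`-algebra via the augmentation `ε`. -/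
noncomputable instance : Algebra GroupAlgZ3 (ZMod 2) :=
  (augEps : GroupAlgZ3 →+* ZMod 2).toAlgebra

/-!
The elements `Tᵢ - 1` form a weakly regular sequence on `R = 𝔽₂[ℤ³]`: setting `Tⱼ = 1` for
`j < i` is a ring endomorphism of `R` with kernel `(T₀ - 1, …, Tᵢ₋₁ - 1)` that fixes `Tᵢ - 1`,
a nonzerodivisor of the domain `R`. Being free, `C` is flat, so the sequence stays regular on `C`.
If `(C/IC, ∂)` is acyclic and `t` is regular on `C/IC`, a diagram chase shows that
`(C/(I + (t))C, ∂)` is acyclic too; starting from `I = 0` this reaches `C/JC = C ⊗_R 𝔽₂`,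
where `J = ker ε = (T₀ - 1, T₁ - 1, T₂ - 1)`.
-/

open AddMonoidAlgebra RingTheory.Sequence TensorProduct

section IsExactMod

variable {A M : Type*} [CommRing A] [AddCommGroup M] [Module A M]

/-- The differential induced by `d` on `M ⧸ N` (for `d`-stable `N`) has vanishing homology. -/
def LinearMap.IsExactMod (d : M →ₗ[A] M) (N : Submodule A M) : Prop :=
  ∀ x, d x ∈ N → ∃ w, x - d w ∈ N

namespace LinearMap.IsExactMod

variable {d : M →ₗ[A] M}

theorem bot_of_ker_eq_range (h : ker d = range d) : d.IsExactMod ⊥ := by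
  intro x hx
  obtain ⟨w, rfl⟩ : x ∈ range d := h ▸ hx
  exact ⟨w, by simp⟩

theorem sup_span_singleton (hd : d ∘ₗ d = 0) {I : Ideal A} {t : A} (h : d.IsExactMod (I • ⊤))
    (ht : IsSMulRegular (M ⧸ (I • ⊤ : Submodule A M)) t) :
    d.IsExactMod ((I ⊔ Ideal.span {t}) • ⊤) := by
  intro x hx
  rw [Submodule.sup_smul, Submodule.ideal_span_singleton_smul] at hx ⊢
  obtain ⟨n, hn, _, hty, hxy⟩ := Submodule.mem_sup.mp hx
  obtain ⟨y, -, rfl⟩ := (Submodule.mem_smul_pointwise_iff_exists _ _ _).mp hty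
  have hdy : d y ∈ (I • ⊤ : Submodule A M) := by
    refine mem_of_isSMulRegular_quotient_of_smul_mem ht ?_
    have : d n + t • d y = 0 := by
      rw [← map_smul, ← map_add, hxy, ← comp_apply, hd, zero_apply]
    rw [eq_neg_of_add_eq_zero_right this]
    exact neg_mem (Submodule.smul_top_le_comap_smul_top I d hn)
  obtain ⟨w, hw⟩ := h y hdy
  obtain ⟨u, hu⟩ := h (x - t • w) <| by
    rw [map_sub, map_smul, ← hxy, add_sub_assoc, ← smul_sub]
    exact add_mem hn (Submodule.smul_of_tower_mem _ t hw)
  exact ⟨u, Submodule.mem_sup.mpr ⟨x - t • w - d u, hu, t • w,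
    Submodule.smul_mem_pointwise_smul _ _ _ trivial, by abel⟩⟩

theorem ofList_smul_top (hd : d ∘ₗ d = 0) (h : d.IsExactMod ⊥) {rs : List A}
    (hrs : IsWeaklyRegular M rs) : d.IsExactMod (Ideal.ofList rs • ⊤) := by
  induction rs using List.reverseRecOn with
  | nil => simpa using h
  | append_singleton rs r ih =>
    rw [isWeaklyRegular_append_iff, isWeaklyRegular_singleton_iff] at hrs
    rw [Ideal.ofList_append, Ideal.ofList_singleton]
    exact (ih hrs.1).sup_span_singleton hd hrs.2

end LinearMap.IsExactMod

variable {B : Type*} [CommRing B] [Algebra A B]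

noncomputable def tensorEquivQuotSMulKer (hB : Function.Surjective (algebraMap A B)) :
    B ⊗[A] M ≃ₗ[A] M ⧸ (RingHom.ker (algebraMap A B) • ⊤ : Submodule A M) :=
  (LinearEquiv.rTensor M
    (AlgEquiv.ofRingEquiv (f := RingHom.quotientKerEquivOfSurjective hB)
      fun _ => rfl).symm.toLinearEquiv) ≪≫ₗ
    quotTensorEquivQuotSMul M _

theorem tensorEquivQuotSMulKer_symm_mk (hB : Function.Surjective (algebraMap A B)) (x : M) :
    (tensorEquivQuotSMulKer hB).symm (Submodule.Quotient.mk x) = (1 : B) ⊗ₜ x := by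
  rw [LinearEquiv.symm_apply_eq]
  simp [tensorEquivQuotSMulKer]

theorem LinearMap.ker_baseChange_eq_range_of_isExactMod
    (hB : Function.Surjective (algebraMap A B)) {d : M →ₗ[A] M} (hd : d ∘ₗ d = 0)
    (h : d.IsExactMod (RingHom.ker (algebraMap A B) • ⊤)) :
    ker (d.baseChange B) = range (d.baseChange B) := by
  set e := tensorEquivQuotSMulKer (M := M) hB
  have one_tmul_surj : ∀ ξ : B ⊗[A] M, ∃ x, (1 : B) ⊗ₜ x = ξ := fun ξ => by
    obtain ⟨x, hx⟩ := Submodule.mkQ_surjective _ (e ξ)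
    exact ⟨x, by rw [← tensorEquivQuotSMulKer_symm_mk hB, ← Submodule.mkQ_apply, hx,
      e.symm_apply_apply]⟩
  have one_tmul_eq_zero : ∀ x : M, (1 : B) ⊗ₜ[A] x = 0 ↔ x ∈ RingHom.ker (algebraMap A B) • ⊤ :=
    fun x => by
      rw [← tensorEquivQuotSMulKer_symm_mk hB, LinearEquiv.map_eq_zero_iff,
        Submodule.Quotient.mk_eq_zero]
  refine le_antisymm (fun ξ hξ => ?_) (range_le_ker_iff.mpr ?_)
  · obtain ⟨x, rfl⟩ := one_tmul_surj ξ
    rw [mem_ker, baseChange_tmul, one_tmul_eq_zero] at hξ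
    obtain ⟨w, hw⟩ := h x hξ
    refine ⟨1 ⊗ₜ w, ?_⟩
    rw [baseChange_tmul, ← sub_eq_zero, ← tmul_sub, one_tmul_eq_zero, ← neg_sub]
    exact neg_mem hw
  · rw [← baseChange_comp, hd, baseChange_zero]

end IsExactMod

theorem Ideal.ofList_take_ofFn {R : Type*} [Semiring R] {n : ℕ} (f : Fin n → R) (i : ℕ) :
    Ideal.ofList ((List.ofFn f).take i) = Ideal.span (f '' {j | (j : ℕ) < i}) := by
  refine congrArg Ideal.span (Set.ext fun r => ?_)
  simp only [Set.mem_ofPred_eq, List.mem_take_iff_getElem, List.length_ofFn, List.getElem_ofFn,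
    Set.mem_image, lt_min_iff]
  constructor
  · rintro ⟨j, ⟨hji, hjn⟩, rfl⟩
    exact ⟨⟨j, hjn⟩, hji, rfl⟩
  · rintro ⟨j, hji, rfl⟩
    exact ⟨j, ⟨hji, j.2⟩, rfl⟩

theorem Ideal.ofList_ofFn {R : Type*} [Semiring R] {n : ℕ} (f : Fin n → R) :
    Ideal.ofList (List.ofFn f) = Ideal.span (Set.range f) :=
  congrArg Ideal.span (Set.ext fun _ => List.mem_ofFn)

theorem isSMulRegular_quotient_ker_smul_top {A B : Type*} [CommRing A] [CommRing B]
    [NoZeroDivisors B] (f : A →+* B) {t : A} (ht : f t ≠ 0) :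
    IsSMulRegular (A ⧸ (RingHom.ker f • ⊤ : Submodule A A)) t := by
  rw [isSMulRegular_quotient_iff_mem_of_smul_mem, Ideal.smul_eq_mul, Ideal.mul_top]
  intro a ha
  rw [RingHom.mem_ker, smul_eq_mul, map_mul] at ha
  exact (mul_eq_zero.mp ha).resolve_left ht

section GroupAlgebra

variable {k G : Type*} [CommRing k] [AddCommGroup G]

theorem AddMonoidAlgebra.single_sub_one_mem_span_of_mem_closure {S : Set G} {g : G}
    (hg : g ∈ AddSubgroup.closure S) :
    single g (1 : k) - 1 ∈ Ideal.span ((fun s => single s (1 : k) - 1) '' S) := by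
  induction hg using AddSubgroup.closure_induction with
  | mem s hs => exact Ideal.subset_span ⟨s, hs, rfl⟩
  | zero => simp [one_def]
  | add g h _ _ hg hh =>
    have e : single (g + h) (1 : k) = single g 1 * single h 1 := by
      rw [single_mul_single, mul_one]
    rw [show single (g + h) (1 : k) - 1 = single g 1 * (single h 1 - 1) + (single g 1 - 1) by
      rw [e]; ring]
    exact add_mem (Ideal.mul_mem_left _ _ hh) hg
  | neg g _ hg =>
    have e : single (-g) (1 : k) * single g 1 = 1 := by
      rw [single_mul_single, neg_add_cancel, mul_one, one_def]
    rw [show single (-g) (1 : k) - 1 = -(single (-g) 1 * (single g 1 - 1)) by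
      linear_combination e]
    exact neg_mem (Ideal.mul_mem_left _ _ hg)

theorem AddMonoidAlgebra.ker_mapDomainRingHom {p : G →+ G} {S : Set G} (hpS : ∀ s ∈ S, p s = 0)
    (hS : ∀ g, g - p g ∈ AddSubgroup.closure S) :
    RingHom.ker (mapDomainRingHom k p) = Ideal.span ((fun s => single s (1 : k) - 1) '' S) := by
  refine le_antisymm (fun a ha => ?_) ?_
  · have sub_mem : ∀ a : k[G], a - mapDomainRingHom k p a ∈
        Ideal.span ((fun s => single s (1 : k) - 1) '' S) := fun a => by
      induction a using induction_linear with
      | zero => simp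
      | add a b ha hb => rw [map_add, add_sub_add_comm]; exact add_mem ha hb
      | single g c =>
        have : single g c - mapDomainRingHom k p (single g c) =
            single (p g) c * (single (g - p g) 1 - 1) := by
          rw [mapDomainRingHom_apply, mapDomain_single, mul_sub, single_mul_single, mul_one,
            mul_one, add_sub_cancel]
        rw [this]
        exact Ideal.mul_mem_left _ _ (single_sub_one_mem_span_of_mem_closure (hS g))
    simpa [RingHom.mem_ker.mp ha] using sub_mem a
  · rw [Ideal.span_le]
    rintro _ ⟨s, hs, rfl⟩
    refine RingHom.mem_ker.mpr ?_
    rw [map_sub, map_one, mapDomainRingHom_apply, mapDomain_single, hpS s hs, one_def, sub_self]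

end GroupAlgebra

section LaurentPolynomial

variable (k : Type*) [CommRing k] {ι : Type*}

def zeroCoords (T : Set ι) [DecidablePred (· ∈ T)] : (ι → ℤ) →+ (ι → ℤ) :=
  AddMonoidHom.pi fun j => if j ∈ T then 0 else Pi.evalAddMonoidHom (fun _ => ℤ) j

@[simp]
theorem zeroCoords_apply (T : Set ι) [DecidablePred (· ∈ T)] (v : ι → ℤ) (j : ι) :
    zeroCoords T v j = if j ∈ T then 0 else v j := by
  by_cases hj : j ∈ T <;> simp [zeroCoords, hj]

theorem zeroCoords_univ : zeroCoords (Set.univ : Set ι) = 0 := by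
  ext; simp

variable [DecidableEq ι]

/-- `Tᵢ - 1` in `k[ℤ^ι]`, for the `i`-th standard generator `Tᵢ` of `ℤ^ι`. -/
noncomputable def genSubOne (i : ι) : k[ι → ℤ] := single (Pi.single i 1) 1 - 1

theorem mem_closure_image_single_of_support_subset [Fintype ι] {T : Set ι} {w : ι → ℤ}
    (hw : ∀ j ∉ T, w j = 0) :
    w ∈ AddSubgroup.closure ((fun j => Pi.single j (1 : ℤ)) '' T) := by
  rw [← Finset.univ_sum_single w]
  refine AddSubgroup.sum_mem _ fun j _ => ?_
  by_cases hj : j ∈ T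
  · rw [← mul_one (w j), ← smul_eq_mul, Pi.single_smul']
    exact AddSubgroup.zsmul_mem _ (AddSubgroup.subset_closure (Set.mem_image_of_mem _ hj)) _
  · simp [hw j hj]

theorem ker_mapDomainRingHom_zeroCoords [Fintype ι] (T : Set ι) [DecidablePred (· ∈ T)] :
    RingHom.ker (mapDomainRingHom k (zeroCoords T)) = Ideal.span (genSubOne k '' T) := by
  rw [ker_mapDomainRingHom (S := (fun j => Pi.single j (1 : ℤ)) '' T), Set.image_image]
  · rfl
  · rintro _ ⟨j, hj, rfl⟩
    ext i
    by_cases hi : i = j <;> simp_all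
  · intro w
    apply mem_closure_image_single_of_support_subset
    intro j hj
    simp [hj]

theorem ker_lift_one_eq_span_genSubOne [Fintype ι] [Nontrivial k] :
    RingHom.ker (lift k k (ι → ℤ) 1 : k[ι → ℤ] →+* k) = Ideal.span (Set.range (genSubOne k)) := by
  have : (algebraMap k k[ι → ℤ]).comp (lift k k (ι → ℤ) 1 : k[ι → ℤ] →+* k) =
      mapDomainRingHom k 0 :=
    ringHom_ext (fun _ => by simp) (fun _ => by simp)
  rw [← RingHom.ker_comp_of_injective _ (FaithfulSMul.algebraMap_injective k k[ι → ℤ]), this,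
    ← zeroCoords_univ, ker_mapDomainRingHom_zeroCoords, Set.image_univ]

theorem genSubOne_ne_zero [Nontrivial k] (i : ι) : genSubOne k i ≠ 0 := by
  rw [genSubOne, sub_ne_zero, one_def, Ne, single_left_inj one_ne_zero]
  simp

theorem mapDomainRingHom_zeroCoords_genSubOne (T : Set ι) [DecidablePred (· ∈ T)] {i : ι}
    (hi : i ∉ T) : mapDomainRingHom k (zeroCoords T) (genSubOne k i) = genSubOne k i := by
  rw [genSubOne, map_sub, map_one, mapDomainRingHom_apply, mapDomain_single]
  congr
  ext j
  by_cases hj : j = i <;> simp_all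

theorem isWeaklyRegular_ofFn_genSubOne [IsDomain k] (n : ℕ) :
    IsWeaklyRegular k[Fin n → ℤ] (List.ofFn (genSubOne k (ι := Fin n))) := by
  rw [isWeaklyRegular_iff_Fin]
  intro i
  have hI : Ideal.ofList ((List.ofFn (genSubOne k (ι := Fin n))).take i) =
      RingHom.ker (mapDomainRingHom k (zeroCoords {j : Fin n | (j : ℕ) < i})) := by
    rw [Ideal.ofList_take_ofFn, ker_mapDomainRingHom_zeroCoords]
  rw [hI]
  apply isSMulRegular_quotient_ker_smul_top
  rw [Fin.getElem_fin, List.getElem_ofFn,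
    mapDomainRingHom_zeroCoords_genSubOne k {j : Fin n | (j : ℕ) < i} (lt_irrefl (i : ℕ))]
  exact genSubOne_ne_zero k _

end LaurentPolynomial

theorem stmt13_general {C : Type*} [AddCommGroup C] [Module GroupAlgZ3 C]
    [Module.Free GroupAlgZ3 C]
    (d : C →ₗ[GroupAlgZ3] C) (hd : d ∘ₗ d = 0)
    (hH : LinearMap.ker d = LinearMap.range d) :
    LinearMap.ker (LinearMap.baseChange (ZMod 2) d) =
      LinearMap.range (LinearMap.baseChange (ZMod 2) d) := by
  have hreg : IsWeaklyRegular C (List.ofFn (genSubOne (ZMod 2) (ι := Fin 3))) :=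
    (TensorProduct.lid GroupAlgZ3 C).isWeaklyRegular_congr _ |>.mp
      (isWeaklyRegular_ofFn_genSubOne (ZMod 2) 3).isWeaklyRegular_rTensor
  have hker : RingHom.ker (algebraMap GroupAlgZ3 (ZMod 2)) =
      Ideal.ofList (List.ofFn (genSubOne (ZMod 2) (ι := Fin 3))) := by
    rw [Ideal.ofList_ofFn, ← ker_lift_one_eq_span_genSubOne]
    rfl
  have hsurj : Function.Surjective (algebraMap GroupAlgZ3 (ZMod 2)) :=
    fun c => ⟨algebraMap (ZMod 2) GroupAlgZ3 c, augEps.commutes c⟩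
  refine d.ker_baseChange_eq_range_of_isExactMod hsurj hd ?_
  rw [hker]
  exact (LinearMap.IsExactMod.bot_of_ker_eq_range hH).ofList_smul_top hd hreg

/-- Let `C` be a finite free module over `R = 𝔽₂[ℤ³]` and
`∂ : C → C` an `R`-linear differential with `∂ ∘ ∂ = 0`.  If the homology of
`(C, ∂)` vanishes (`ker ∂ = range ∂`), then the homology of the base change
of `(C, ∂)` along the augmentation `ε : R → 𝔽₂` also vanishes. -/
theorem stmt13 {C : Type*} [AddCommGroup C] [Module GroupAlgZ3 C]
    [Module.Free GroupAlgZ3 C] [Module.Finite GroupAlgZ3 C]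
    (d : C →ₗ[GroupAlgZ3] C) (hd : d ∘ₗ d = 0)
    (hH : LinearMap.ker d = LinearMap.range d) :
    LinearMap.ker (LinearMap.baseChange (ZMod 2) d) =
      LinearMap.range (LinearMap.baseChange (ZMod 2) d) :=
  stmt13_general d hd hH
end
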